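/- arXiv:1207.4257 — 6 statements merged into one kernel-verified Lean document; each statement's English description precedes it below -/
import Mathlib

section
/- Let $L$ be a coalgebra (without counit) over a field $k$ with coproduct $\delta$, and suppose $\tau\delta = -\delta$ where $\tau$ is the flip map and the characteristic of $k$ is not 2. Then $(1 \otimes \delta)\delta = 0$; in particular $L$ is 2-conilpotent. -/
/-!
Write `A = (1 ⊗ δ) ∘ δ` and let `σ` be the cyclic permutation `a ⊗ (b ⊗ c) ↦ b ⊗ (c ⊗ a)`.
Coassociativity rewrites `A` as `assoc ∘ (δ ⊗ 1) ∘ δ`; replacing the inner `δ` by `-τδ` and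
moving `τ` past `δ ⊗ 1` turns this into `-σA`. Since `σ³ = 1`, iterating `A = -σA` three times
gives `A = -A`, so `A = 0` when `2 ≠ 0`, and coassociativity transports this to
`(δ ⊗ 1) ∘ δ = 0`.
-/

open TensorProduct

noncomputable section

variable (k : Type*) [Field k]

def Coassoc {V : Type*} [AddCommGroup V] [Module k V] (δ : V →ₗ[k] V ⊗[k] V) : Prop :=
  (TensorProduct.assoc k V V V).toLinearMap ∘ₗ (TensorProduct.map δ LinearMap.id) ∘ₗ δ
    = (TensorProduct.map LinearMap.id δ) ∘ₗ δ

lemma eq_zero_of_eq_neg_of_two_ne_zero {R M : Type*} [DivisionRing R] [AddCommGroup M]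
    [Module R M] (h2 : (2 : R) ≠ 0) {x : M} (hx : x = -x) : x = 0 := by
  have h : (2 : R) • x = 0 := by rw [two_smul]; nth_rewrite 1 [hx]; exact neg_add_cancel x
  exact (smul_eq_zero_iff_right h2).mp h

lemma eq_neg_self_of_eq_neg_of_iterate_three {W : Type*} [AddGroup W] (ρ : W →+ W) {x : W}
    (hρ : ρ (ρ (ρ x)) = x) (hx : x = -ρ x) : x = -x := by
  have hρx : ρ x = -ρ (ρ x) := by conv_lhs => rw [hx, map_neg]
  have hρρx : ρ (ρ x) = -x := by conv_lhs => rw [hx, map_neg, map_neg, hρ]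
  rwa [hρx, hρρx, neg_neg] at hx

section TensorRotate

variable (R M : Type*) [CommSemiring R] [AddCommMonoid M] [Module R M]

def tensorRotate : M ⊗[R] (M ⊗[R] M) →ₗ[R] M ⊗[R] (M ⊗[R] M) :=
  (TensorProduct.assoc R M M M).toLinearMap ∘ₗ (TensorProduct.comm R M (M ⊗[R] M)).toLinearMap

variable {R M}

@[simp]
lemma tensorRotate_tmul (a b c : M) : tensorRotate R M (a ⊗ₜ (b ⊗ₜ c)) = b ⊗ₜ (c ⊗ₜ a) := rfl

lemma tensorRotate_tensorRotate_tensorRotate (x : M ⊗[R] (M ⊗[R] M)) :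
    tensorRotate R M (tensorRotate R M (tensorRotate R M x)) = x := by
  induction x using TensorProduct.induction_on with
  | zero => simp only [map_zero]
  | add x y hx hy => simp only [map_add, hx, hy]
  | tmul a x =>
    induction x using TensorProduct.induction_on with
    | zero => simp only [tmul_zero, map_zero]
    | add x y hx hy => simp only [tmul_add, map_add, hx, hy]
    | tmul b c => simp only [tensorRotate_tmul]

end TensorRotate

variable {k}

lemma map_id_apply_eq_neg_tensorRotate {V : Type*} [AddCommGroup V] [Module k V]
    {δ : V →ₗ[k] V ⊗[k] V} (hcoassoc : Coassoc k δ)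
    (hanti : (TensorProduct.comm k V V).toLinearMap ∘ₗ δ = -δ) (v : V) :
    map LinearMap.id δ (δ v) = -tensorRotate k V (map LinearMap.id δ (δ v)) := by
  have hδ : δ v = -TensorProduct.comm k V V (δ v) := by
    have h := LinearMap.congr_fun hanti v
    simp only [LinearMap.comp_apply, LinearEquiv.coe_coe, LinearMap.neg_apply] at h
    rw [h, neg_neg]
  calc map LinearMap.id δ (δ v)
      = TensorProduct.assoc k V V V (map δ LinearMap.id (δ v)) :=
        (LinearMap.congr_fun hcoassoc v).symm
    _ = -TensorProduct.assoc k V V V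
          (map δ LinearMap.id (TensorProduct.comm k V V (δ v))) := by
        conv_lhs => rw [hδ]
        simp only [map_neg]
    _ = -tensorRotate k V (map LinearMap.id δ (δ v)) := by
        rw [map_comm]
        rfl

/-- An anti-cocommutative coalgebra (without counit) over a field of characteristic ≠ 2
satisfies `(1 ⊗ δ)δ = 0`; in particular it is 2-conilpotent, i.e. `(δ ⊗ 1)δ = 0`. -/
theorem anti_cocommutative_two_conilpotent
    {V : Type*} [AddCommGroup V] [Module k V]
    (hchar : (2 : k) ≠ 0)
    (δ : V →ₗ[k] V ⊗[k] V)
    (hcoassoc : Coassoc k δ)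
    (hanti : (TensorProduct.comm k V V).toLinearMap ∘ₗ δ = -δ) :
    (TensorProduct.map LinearMap.id δ) ∘ₗ δ = 0 ∧
      (TensorProduct.map δ LinearMap.id) ∘ₗ δ = 0 := by
  have hright : (TensorProduct.map LinearMap.id δ) ∘ₗ δ = 0 := LinearMap.ext fun v =>
    eq_zero_of_eq_neg_of_two_ne_zero hchar <|
      eq_neg_self_of_eq_neg_of_iterate_three (tensorRotate k V).toAddMonoidHom
        (tensorRotate_tensorRotate_tensorRotate _)
        (map_id_apply_eq_neg_tensorRotate hcoassoc hanti v)
  refine ⟨hright, LinearMap.ext fun v => ?_⟩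
  rw [LinearMap.comp_apply, LinearMap.zero_apply,
    ← (TensorProduct.assoc k V V V).map_eq_zero_iff]
  exact (LinearMap.congr_fun hcoassoc v).trans (LinearMap.congr_fun hright v)

end
end

section
/- Let $L$ be an anti-cocommutative coalgebra without counit over a field of characteristic not 2. Then $\delta(L) \subseteq (\ker \delta) \otimes (\ker \delta)$. -/
/-! The three-fold coproduct `Δ₃ = (1 ⊗ δ) δ` is antisymmetric in its last two factors and, by
coassociativity `Δ₃ = (δ ⊗ 1) δ`, also in its first two. The cyclic shift of the three factors is
the product of these two transpositions, so it fixes `Δ₃`. But the cyclic shift turns `(δ ⊗ 1) δ`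
into `(1 ⊗ δ)(τ δ) = -Δ₃`. Hence `2 Δ₃ = 0`, so `Δ₃ = 0`: `δ x` is killed by `1 ⊗ δ` and by
`δ ⊗ 1`, which over a field places it in `ker δ ⊗ ker δ`. -/

open TensorProduct

noncomputable section

variable (k : Type*) [Field k]

namespace TensorProduct

variable {R M N P : Type*} [CommSemiring R] [AddCommMonoid M] [AddCommMonoid N]
  [AddCommMonoid P] [Module R M] [Module R N] [Module R P]

theorem comm_comp_assoc_symm_eq :
    (TensorProduct.comm R (M ⊗[R] N) P).toLinearMap
        ∘ₗ (TensorProduct.assoc R M N P).symm.toLinearMap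
      = (TensorProduct.assoc R P M N).toLinearMap
          ∘ₗ (TensorProduct.comm R M P).toLinearMap.rTensor N
          ∘ₗ (TensorProduct.assoc R M P N).symm.toLinearMap
          ∘ₗ (TensorProduct.comm R N P).toLinearMap.lTensor M := by
  ext; rfl

end TensorProduct

namespace LinearMap

theorem mem_range_map_subtype_ker_of_lTensor_of_rTensor {R M N : Type*} [CommRing R]
    [AddCommGroup M] [AddCommGroup N] [Module R M] [Module R N] (f : M →ₗ[R] N)
    [Module.Flat R M] [Module.Flat R N] [Module.Flat R (ker f)] {t : M ⊗[R] M}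
    (hl : f.lTensor M t = 0) (hr : f.rTensor M t = 0) :
    t ∈ range (map (ker f).subtype (ker f).subtype) := by
  obtain ⟨y, rfl⟩ := (Module.Flat.lTensor_exact M f.exact_subtype_ker_map t).mp hl
  have hy : f.rTensor (ker f) y = 0 := by
    apply Module.Flat.lTensor_preserves_injective_linearMap (M := N) _ (ker f).injective_subtype
    rw [← comp_apply, lTensor_comp_rTensor, ← rTensor_comp_lTensor, map_zero]
    exact hr
  obtain ⟨z, rfl⟩ := (Module.Flat.rTensor_exact (ker f) f.exact_subtype_ker_map y).mp hy
  exact ⟨z, by rw [← lTensor_comp_rTensor]; rfl⟩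

end LinearMap

section AntiCocommutative

variable {k} {L : Type*} [AddCommGroup L] [Module k L] {δ : L →ₗ[k] L ⊗[k] L}

theorem lTensor_comp_eq_zero_of_coassoc_of_comm_comp_eq_neg (hchar : (2 : k) ≠ 0)
    (hcoassoc : Coassoc k δ) (hanti : (TensorProduct.comm k L L).toLinearMap ∘ₗ δ = -δ) :
    δ.lTensor L ∘ₗ δ = 0 := by
  set Δ₃ := δ.lTensor L ∘ₗ δ
  have hcoassoc' : (TensorProduct.assoc k L L L).symm.toLinearMap ∘ₗ Δ₃ = δ.rTensor L ∘ₗ δ := by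
    ext x; exact (LinearEquiv.symm_apply_eq _).mpr (LinearMap.congr_fun hcoassoc x).symm
  have hcycle_neg : (TensorProduct.comm k (L ⊗[k] L) L).toLinearMap
      ∘ₗ (TensorProduct.assoc k L L L).symm ∘ₗ Δ₃ = -Δ₃ := by
    rw [hcoassoc', ← LinearMap.comp_assoc, ← LinearMap.lTensor_comp_comm, LinearMap.comp_assoc,
      hanti, LinearMap.comp_neg]
  have hanti₂₃ : (TensorProduct.comm k L L).toLinearMap.lTensor L ∘ₗ Δ₃ = -Δ₃ := by
    rw [← LinearMap.comp_assoc, ← LinearMap.lTensor_comp, hanti, LinearMap.lTensor_neg,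
      LinearMap.neg_comp]
  have hanti₁₂ : (TensorProduct.comm k L L).toLinearMap.rTensor L ∘ₗ δ.rTensor L ∘ₗ δ
      = -(δ.rTensor L ∘ₗ δ) := by
    rw [← LinearMap.comp_assoc, ← LinearMap.rTensor_comp, hanti, LinearMap.rTensor_neg,
      LinearMap.neg_comp]
  have hcycle_pos : (TensorProduct.comm k (L ⊗[k] L) L).toLinearMap
      ∘ₗ (TensorProduct.assoc k L L L).symm ∘ₗ Δ₃ = Δ₃ := by
    rw [← LinearMap.comp_assoc, TensorProduct.comm_comp_assoc_symm_eq]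
    simp only [LinearMap.comp_assoc]
    rw [hanti₂₃, LinearMap.comp_neg, hcoassoc', LinearMap.comp_neg, hanti₁₂, LinearMap.comp_neg,
      LinearMap.comp_neg, neg_neg]
    exact hcoassoc
  have h2 : (2 : k) • Δ₃ = 0 := by
    rw [two_smul]; nth_rewrite 1 [← hcycle_pos]; rw [hcycle_neg, neg_add_cancel]
  exact (smul_eq_zero.mp h2).resolve_left hchar

end AntiCocommutative

/-- For an anti-cocommutative coalgebra without counit (char k ≠ 2),
`δ(L) ⊆ (ker δ) ⊗ (ker δ)`. -/
theorem anti_cocommutative_delta_range_le_ker_tmul_ker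
    {L : Type*} [AddCommGroup L] [Module k L]
    (hchar : (2 : k) ≠ 0)
    (δ : L →ₗ[k] L ⊗[k] L)
    (hcoassoc : Coassoc k δ)
    (hanti : (TensorProduct.comm k L L).toLinearMap ∘ₗ δ = -δ) :
    ∀ x : L, δ x ∈ LinearMap.range
      (TensorProduct.map (LinearMap.ker δ).subtype (LinearMap.ker δ).subtype) := by
  have hΔ₃ := lTensor_comp_eq_zero_of_coassoc_of_comm_comp_eq_neg hchar hcoassoc hanti
  intro x
  apply δ.mem_range_map_subtype_ker_of_lTensor_of_rTensor
  · exact LinearMap.congr_fun hΔ₃ x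
  · apply (TensorProduct.assoc k L L L).injective
    rw [map_zero]
    exact (LinearMap.congr_fun hcoassoc x).trans (LinearMap.congr_fun hΔ₃ x)

end
end

section
/- Let $\mathfrak{g} = kx \oplus ky$ be the 2-dimensional Lie algebra with $[x,y] = y$, and let $\lambda \in k$. Define $\delta : \mathfrak{g} \to \mathfrak{g} \otimes \mathfrak{g}$ by $\delta(x) = \lambda\, y \otimes y$ and $\delta(y) = 0$. Then $\delta$ is coassociative, and for all $a, b \in \mathfrak{g}$ the compatibility condition $\delta([a,b]) = b_1 \otimes [a,b_2] + [a,b_1] \otimes b_2 + [a_1,b] \otimes a_2 + a_1 \otimes [a_2,b] + [\delta(a),\delta(b)]$ holds (where the bracket on $\mathfrak{g} \otimes \mathfrak{g}$ is the commutator inside $U(\mathfrak{g}) \otimes U(\mathfrak{g})$). -/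
/-!
Let `χ` be the coordinate along `x`, so that `y` is a weight vector, `⁅a, y⁆ = χ a • y`, and
`δ a = λ χ(a) y ⊗ y`. Coassociativity holds because both iterates of `δ` pass through
`δ y = 0`. In the compatibility identity, `δ ⁅a, b⁆ = 0` since a weight vanishes on brackets,
`⁅δ a, δ b⁆ = 0` since both are multiples of `y ⊗ y`, and `a ⊗ 1 + 1 ⊗ a` acts on `y ⊗ y` as a
derivation, i.e. by `2 χ(a)`; the two remaining terms `2λχ(a)χ(b) y ⊗ y` and
`-2λχ(a)χ(b) y ⊗ y` cancel.
-/

open TensorProduct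

noncomputable section

variable (k : Type*) [Field k]

abbrev UEA (L : Type*) [LieRing L] [LieAlgebra k L] := UniversalEnvelopingAlgebra k L

/-- The canonical embedding `L → U(L)`, as a linear map. -/
def emb (L : Type*) [LieRing L] [LieAlgebra k L] : L →ₗ[k] UEA k L :=
  letI := LieRing.ofAssociativeRing (A := UEA k L)
  (UniversalEnvelopingAlgebra.ι k).toLinearMap

/-- The canonical map `L ⊗ L → U(L) ⊗ U(L)`. -/
def emb2 (L : Type*) [LieRing L] [LieAlgebra k L] :
    L ⊗[k] L →ₗ[k] UEA k L ⊗[k] UEA k L :=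
  TensorProduct.map (emb k L) (emb k L)

/-- The compatibility condition (E1.1.1)=(E1.2.2) for a coassociative Lie algebra,
stated inside `U(L) ⊗ U(L)`, where brackets are ring commutators.  (It encodes both
the identity `δ([a,b]) = b₁ ⊗ [a,b₂] + [a,b₁] ⊗ b₂ + [a₁,b] ⊗ a₂ + a₁ ⊗ [a₂,b] +
[δ(a),δ(b)]` and the requirement that `[δ(a),δ(b)]` lies in `L ⊗ L`.) -/
def Compat {L : Type*} [LieRing L] [LieAlgebra k L] (δ : L →ₗ[k] L ⊗[k] L) : Prop :=
  ∀ a b : L,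
    emb2 k L (δ ⁅a, b⁆) =
      ⁅(emb k L a) ⊗ₜ[k] (1 : UEA k L) + (1 : UEA k L) ⊗ₜ[k] (emb k L a), emb2 k L (δ b)⁆ +
      ⁅emb2 k L (δ a), (emb k L b) ⊗ₜ[k] (1 : UEA k L) + (1 : UEA k L) ⊗ₜ[k] (emb k L b)⁆ +
      ⁅emb2 k L (δ a), emb2 k L (δ b)⁆

section

variable {k}

attribute [local instance] LieRing.ofAssociativeRing

theorem lie_tmul_one_add_one_tmul_tmul {A : Type*} [Ring A] [Algebra k A] (u v w : A) :
    ⁅u ⊗ₜ[k] (1 : A) + (1 : A) ⊗ₜ[k] u, v ⊗ₜ[k] w⁆ = ⁅u, v⁆ ⊗ₜ[k] w + v ⊗ₜ[k] ⁅u, w⁆ := by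
  simp only [Ring.lie_def, add_mul, mul_add, Algebra.TensorProduct.tmul_mul_tmul, one_mul,
    mul_one, sub_tmul, tmul_sub]
  abel

theorem coassoc_of_eq_smul_tmul_self {V : Type*} [AddCommGroup V] [Module k V]
    (δ : V →ₗ[k] V ⊗[k] V) (φ : V → k) (y : V) (hδ : ∀ a, δ a = φ a • (y ⊗ₜ[k] y))
    (hy : φ y = 0) : Coassoc k δ := by
  ext a
  simp [hδ, hy]

theorem weight_lie_eq_zero {L : Type*} [LieRing L] [LieAlgebra k L] (χ : L → k) (y : L)
    (hy : y ≠ 0) (hχ : ∀ a, ⁅a, y⁆ = χ a • y) (a c : L) : χ ⁅a, c⁆ = 0 := by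
  have : χ ⁅a, c⁆ • y = 0 := by
    rw [← hχ, lie_lie, hχ, hχ, lie_smul, lie_smul, hχ, hχ, smul_smul, smul_smul, mul_comm,
      sub_self]
  exact (smul_eq_zero.mp this).resolve_right hy

theorem emb_lie {L : Type*} [LieRing L] [LieAlgebra k L] (a c : L) :
    emb k L ⁅a, c⁆ = ⁅emb k L a, emb k L c⁆ :=
  (UniversalEnvelopingAlgebra.ι k).map_lie a c

theorem compat_of_eq_smul_tmul_self {L : Type*} [LieRing L] [LieAlgebra k L]
    (δ : L →ₗ[k] L ⊗[k] L) (χ : L → k) (lam : k) (y : L)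
    (hδ : ∀ a, δ a = (lam * χ a) • (y ⊗ₜ[k] y))
    (hχ : ∀ a, ⁅a, y⁆ = χ a • y) (hχ_lie : ∀ a c : L, χ ⁅a, c⁆ = 0) : Compat k δ := by
  intro a c
  set Y := emb k L y
  have hY : emb2 k L (y ⊗ₜ[k] y) = Y ⊗ₜ[k] Y := rfl
  have hact : ∀ a, ⁅emb k L a ⊗ₜ[k] (1 : UEA k L) + 1 ⊗ₜ[k] emb k L a, Y ⊗ₜ[k] Y⁆
      = (2 * χ a) • (Y ⊗ₜ[k] Y) := by
    intro a
    rw [lie_tmul_one_add_one_tmul_tmul, ← emb_lie, hχ, map_smul, smul_tmul, tmul_smul]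
    module
  simp only [hδ, hχ_lie, map_smul, hY, lie_smul, smul_lie, hact, lie_self]
  rw [← lie_skew, hact]
  module

end

/-- Example 1.4: on the 2-dimensional non-abelian Lie algebra with basis `x, y`,
`[x,y] = y`, the coproduct `δ(x) = λ y ⊗ y`, `δ(y) = 0` makes it a coassociative
Lie algebra. -/
theorem example_two_dim_coassociative_lie
    {L : Type*} [LieRing L] [LieAlgebra k L]
    (b : Module.Basis (Fin 2) k L)
    (hbracket : ⁅b 0, b 1⁆ = b 1)
    (lam : k)
    (δ : L →ₗ[k] L ⊗[k] L)
    (hδx : δ (b 0) = lam • (b 1 ⊗ₜ[k] b 1))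
    (hδy : δ (b 1) = 0) :
    Coassoc k δ ∧ Compat k δ := by
  set χ := b.coord 0
  have hχ : ∀ a, ⁅a, b 1⁆ = χ a • b 1 := by
    intro a
    have ha := b.sum_repr a
    rw [Fin.sum_univ_two] at ha
    conv_lhs => rw [← ha]
    simp [add_lie, smul_lie, hbracket, χ]
  have hδ : ∀ a, δ a = (lam * χ a) • (b 1 ⊗ₜ[k] b 1) := by
    suffices δ = (lam • χ).smulRight (b 1 ⊗ₜ[k] b 1) from fun a => by simp [this]
    refine b.ext fun i => ?_
    fin_cases i <;> simp [hδx, hδy, χ]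
  refine ⟨coassoc_of_eq_smul_tmul_self δ _ (b 1) hδ (by simp [χ]), ?_⟩
  exact compat_of_eq_smul_tmul_self δ χ lam (b 1) hδ hχ
    (weight_lie_eq_zero χ (b 1) (b.ne_zero 1) hχ)

end
end

section
/- Let $L$ be a coalgebra without counit with coproduct $\delta$ such that $\delta(L)$ is 1-dimensional and $(\delta \otimes 1)\delta \neq 0$, over an algebraically closed field. Then there exists $0 \neq T \in L$ such that $T \otimes T$ spans $\delta(L)$. -/
/-!
Write `δ(L) = k ∙ E`. Because every `δ y` is a multiple of `E`, `(δ ⊗ 1) E = E ⊗ w` and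
`(1 ⊗ δ) E = a ⊗ E`; coassociativity at an `x` with `(δ ⊗ 1) δ x ≠ 0` then gives
`E ⊗ w = a ⊗ E` in `L ⊗ L ⊗ L` with `w ≠ 0`. Contracting the last factor against a functional
with value `1` on `w` shows that `E = a ⊗ u` is a pure tensor; substituting back gives
`u ⊗ w = a ⊗ u`, so `a = c u` and `E = c (u ⊗ u)`, and a square root of `c` gives `T`.
-/

open TensorProduct

noncomputable section

variable (k : Type*) [Field k]

namespace LinearMap

variable {R M N P : Type*} [CommSemiring R] [AddCommMonoid M] [AddCommMonoid N] [AddCommMonoid P]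
  [Module R M] [Module R N] [Module R P]

theorem exists_rTensor_eq_tmul_of_range_le_span_singleton (f : M →ₗ[R] N) {e : N}
    (hf : range f ≤ R ∙ e) (z : M ⊗[R] P) : ∃ w, f.rTensor P z = e ⊗ₜ w := by
  induction z using TensorProduct.induction_on with
  | zero => exact ⟨0, by simp⟩
  | tmul m p =>
    obtain ⟨c, hc⟩ := Submodule.mem_span_singleton.mp (hf (mem_range_self f m))
    exact ⟨c • p, by rw [rTensor_tmul, ← hc, smul_tmul]⟩
  | add z₁ z₂ h₁ h₂ =>
    obtain ⟨w₁, hw₁⟩ := h₁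
    obtain ⟨w₂, hw₂⟩ := h₂
    exact ⟨w₁ + w₂, by rw [map_add, hw₁, hw₂, tmul_add]⟩

theorem exists_lTensor_eq_tmul_of_range_le_span_singleton (f : M →ₗ[R] N) {e : N}
    (hf : range f ≤ R ∙ e) (z : P ⊗[R] M) : ∃ w, f.lTensor P z = w ⊗ₜ e := by
  induction z using TensorProduct.induction_on with
  | zero => exact ⟨0, by simp⟩
  | tmul p m =>
    obtain ⟨c, hc⟩ := Submodule.mem_span_singleton.mp (hf (mem_range_self f m))
    exact ⟨c • p, by rw [lTensor_tmul, ← hc, smul_tmul]⟩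
  | add z₁ z₂ h₁ h₂ =>
    obtain ⟨w₁, hw₁⟩ := h₁
    obtain ⟨w₂, hw₂⟩ := h₂
    exact ⟨w₁ + w₂, by rw [map_add, hw₁, hw₂, add_tmul]⟩

end LinearMap

section OverField

variable {k} {U V W : Type*} [AddCommGroup U] [Module k U] [AddCommGroup V] [Module k V]
  [AddCommGroup W] [Module k W]

theorem Submodule.exists_eq_span_singleton_of_finrank_eq_one {p : Submodule k V}
    (h : Module.finrank k p = 1) : ∃ e : V, e ≠ 0 ∧ p = k ∙ e := by
  obtain ⟨e, he, hspan⟩ := finrank_eq_one_iff'.mp h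
  refine ⟨e, by simpa using he, le_antisymm (fun v hv => ?_) ?_⟩
  · obtain ⟨c, hc⟩ := hspan ⟨v, hv⟩
    exact Submodule.mem_span_singleton.mpr ⟨c, congr_arg Subtype.val hc⟩
  · exact (Submodule.span_singleton_le_iff_mem _ _).mpr e.2

theorem TensorProduct.tmul_right_injective {v : V} (hv : v ≠ 0) :
    Function.Injective (v ⊗ₜ[k] · : W → V ⊗[k] W) := by
  intro t t' h
  obtain ⟨g, hg⟩ := Module.Projective.exists_dual_eq_one k hv
  simpa [hg] using congr_arg ((TensorProduct.lid k W).toLinearMap ∘ₗ g.rTensor W) h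

theorem TensorProduct.exists_eq_smul_of_tmul_eq_tmul {a a' : V} {b b' : W} (hb' : b' ≠ 0)
    (h : a ⊗ₜ[k] b = a' ⊗ₜ[k] b') : ∃ c : k, a' = c • a := by
  obtain ⟨g, hg⟩ := Module.Projective.exists_dual_eq_one k hb'
  refine ⟨g b, ?_⟩
  simpa [hg] using congr_arg ((TensorProduct.rid k V).toLinearMap ∘ₗ g.lTensor V) h.symm

theorem TensorProduct.exists_eq_tmul_of_assoc_tmul_eq_tmul {E : U ⊗[k] V} {w : W} (hw : w ≠ 0)
    {a : U} {F : V ⊗[k] W} (h : TensorProduct.assoc k U V W (E ⊗ₜ w) = a ⊗ₜ F) :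
    ∃ b, E = a ⊗ₜ b := by
  obtain ⟨g, hg⟩ := Module.Projective.exists_dual_eq_one k hw
  let r : V ⊗[k] W →ₗ[k] V := (TensorProduct.rid k V).toLinearMap ∘ₗ g.lTensor V
  have hcontract : ∀ z : U ⊗[k] V, r.lTensor U (TensorProduct.assoc k U V W (z ⊗ₜ w)) = z := by
    intro z
    induction z using TensorProduct.induction_on with
    | zero => simp
    | tmul u v => simp [r, hg]
    | add z₁ z₂ h₁ h₂ => rw [add_tmul, map_add, map_add, h₁, h₂]
  exact ⟨r F, by rw [← hcontract E, h, LinearMap.lTensor_tmul]⟩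

theorem TensorProduct.exists_eq_tmul_self_of_assoc_tmul_eq_tmul [IsAlgClosed k] {E : V ⊗[k] V}
    (hE : E ≠ 0) {w a : V} (hw : w ≠ 0) (h : TensorProduct.assoc k V V V (E ⊗ₜ w) = a ⊗ₜ E) :
    ∃ T : V, E = T ⊗ₜ T := by
  obtain ⟨u, rfl⟩ := exists_eq_tmul_of_assoc_tmul_eq_tmul hw h
  have ha : a ≠ 0 := by rintro rfl; simp at hE
  have hu : u ≠ 0 := by rintro rfl; simp at hE
  have hswap : u ⊗ₜ w = a ⊗ₜ u := tmul_right_injective ha (by simpa using h)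
  obtain ⟨c, rfl⟩ := exists_eq_smul_of_tmul_eq_tmul hu hswap
  obtain ⟨μ, hμ⟩ := IsAlgClosed.exists_pow_nat_eq c two_pos
  exact ⟨μ • u, by rw [smul_tmul_smul, ← sq, hμ, smul_tmul']⟩

end OverField

section Coassoc

variable {k} {L : Type*} [AddCommGroup L] [Module k L]

theorem Coassoc.exists_assoc_tmul_eq_tmul
    {δ : L →ₗ[k] L ⊗[k] L} (hδ : Coassoc k δ) {E : L ⊗[k] L} (hrange : LinearMap.range δ ≤ k ∙ E)
    (hnot2 : TensorProduct.map δ LinearMap.id ∘ₗ δ ≠ 0) :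
    ∃ w a : L, w ≠ 0 ∧ TensorProduct.assoc k L L L (E ⊗ₜ w) = a ⊗ₜ E := by
  obtain ⟨x, hx⟩ : ∃ x, TensorProduct.map δ LinearMap.id (δ x) ≠ 0 := by
    by_contra! h
    exact hnot2 (LinearMap.ext h)
  obtain ⟨c, hc⟩ := Submodule.mem_span_singleton.mp (hrange (LinearMap.mem_range_self δ x))
  obtain ⟨w, hw⟩ := δ.exists_rTensor_eq_tmul_of_range_le_span_singleton hrange E
  obtain ⟨a, ha⟩ := δ.exists_lTensor_eq_tmul_of_range_le_span_singleton hrange E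
  have hcx : c • E ⊗ₜ[k] w ≠ 0 := by
    rwa [← hc, map_smul, ← LinearMap.rTensor_def, hw] at hx
  refine ⟨w, a, fun hw0 => hcx (by simp [hw0]),
    smul_right_injective _ (left_ne_zero_of_smul hcx) ?_⟩
  have := LinearMap.congr_fun hδ x
  simp only [LinearMap.comp_apply, LinearEquiv.coe_toLinearMap, ← hc, map_smul] at this
  simpa only [← LinearMap.rTensor_def, ← LinearMap.lTensor_def, hw, ha] using this

end Coassoc

/-- Lemma 3.8(b): if `δ(L)` is 1-dimensional and `L` is not 2-conilpotent
(i.e. `(δ ⊗ 1)δ ≠ 0`), over an algebraically closed field, then `δ(L)` is spanned by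
an element of the form `T ⊗ T` with `T ≠ 0`. -/
theorem delta_range_spanned_by_T_tmul_T [IsAlgClosed k]
    {L : Type*} [AddCommGroup L] [Module k L]
    (δ : L →ₗ[k] L ⊗[k] L)
    (hcoassoc : Coassoc k δ)
    (hdim : Module.finrank k (LinearMap.range δ) = 1)
    (hnot2 : (TensorProduct.map δ LinearMap.id) ∘ₗ δ ≠ 0) :
    ∃ T : L, T ≠ 0 ∧ LinearMap.range δ = Submodule.span k {T ⊗ₜ[k] T} := by
  obtain ⟨E, hE, hrange⟩ := Submodule.exists_eq_span_singleton_of_finrank_eq_one hdim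
  obtain ⟨w, a, hw, hassoc⟩ := hcoassoc.exists_assoc_tmul_eq_tmul hrange.le hnot2
  obtain ⟨T, rfl⟩ := exists_eq_tmul_self_of_assoc_tmul_eq_tmul hE hw hassoc
  exact ⟨T, by rintro rfl; simp at hE, hrange⟩

end
end

section
/- Every 2-dimensional Lie subalgebra of $sl_2(k)$ (with char $k \neq 2$, $k$ algebraically closed) is equal to one of: (i) $kf + kh$, (ii) $ke + kh$, or (iii) $k(e + ah) + k(-4af + h)$ for some $a \in k^\times$, where $\{e, f, h\}$ is the standard basis with $[h,e] = 2e$, $[h,f] = -2f$, $[e,f] = h$. -/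
/-!
A codimension-one subspace `S` of `sl₂` is the kernel of a nonzero functional `φ`. Writing
`p = φ e`, `q = φ f`, `r = φ h`, the elements `q e - p f`, `r e - p h`, `r f - q h` lie in `S`,
and `φ` of their pairwise brackets is `(p, q, r)` times `4pq + r²` (the dual of the Killing
form, up to a scalar). So a subalgebra forces `4pq + r² = 0`, and the three families are the
three kinds of nonzero solutions of this equation.
-/

open Module

namespace Submodule

variable {K V : Type*} [Field K] [AddCommGroup V] [Module K V]

theorem exists_dual_ker_eq_of_finrank_add_one [FiniteDimensional K V] {W : Submodule K V}
    (hW : finrank K W + 1 = finrank K V) : ∃ φ : Dual K V, φ ≠ 0 ∧ LinearMap.ker φ = W := by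
  obtain ⟨φ, hφ, hWφ⟩ :=
    W.exists_dual_map_eq_bot_of_lt_top (lt_top_of_finrank_lt_finrank (by omega)) inferInstance
  refine ⟨φ, hφ, (eq_of_le_of_finrank_eq (LinearMap.le_ker_iff_map.mpr hWφ) ?_).symm⟩
  have := Dual.finrank_ker_add_one_of_ne_zero hφ
  omega

theorem eq_span_pair_of_finrank_eq_two {W : Submodule K V} (hW : finrank K W = 2) {x y : V}
    (hx : x ∈ W) (hy : y ∈ W) (hxy : LinearIndependent K ![x, y]) : W = span K {x, y} := by
  have : FiniteDimensional K W := finite_of_finrank_eq_succ hW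
  refine (eq_of_le_of_finrank_eq (span_le.mpr (Set.insert_subset hx (by simpa))) ?_).symm
  rw [hW, ← Matrix.range_cons_cons_empty, finrank_span_eq_card hxy, Fintype.card_fin]

end Submodule

theorem LinearIndependent.eq_zero_of_smul_add_smul_add_smul {K V : Type*} [Field K]
    [AddCommGroup V] [Module K V] {x y z : V} (hxyz : LinearIndependent K ![x, y, z])
    {a b c : K} (habc : a • x + b • y + c • z = 0) : a = 0 ∧ b = 0 ∧ c = 0 := by
  have := Fintype.linearIndependent_iff.mp hxyz ![a, b, c]
    (by simpa [Fin.sum_univ_three, add_assoc] using habc)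
  exact ⟨this 0, this 1, this 2⟩

theorem isotropic_cases {K : Type*} [Field K] (h2 : (2 : K) ≠ 0) {p q r : K}
    (hpqr : 4 * (p * q) + r ^ 2 = 0) :
    (q = 0 ∧ r = 0) ∨ (p = 0 ∧ r = 0) ∨ ∃ a ≠ 0, p + a * r = 0 ∧ -(4 * a * q) + r = 0 := by
  have h4 : (4 : K) ≠ 0 := by simpa [show (4 : K) = 2 * 2 by norm_num] using mul_ne_zero h2 h2
  by_cases hr : r = 0
  · subst hr
    have : p * q = 0 := by simpa [h4] using hpqr
    rcases mul_eq_zero.mp this with hp | hq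
    · exact .inr (.inl ⟨hp, rfl⟩)
    · exact .inl ⟨hq, rfl⟩
  · have hq : q ≠ 0 := by
      rintro rfl
      exact hr (pow_eq_zero_iff two_ne_zero |>.mp (by simpa using hpqr))
    refine .inr (.inr ⟨r / (4 * q), by positivity, ?_, ?_⟩)
    · field_simp
      linear_combination hpqr
    · field_simp
      ring

section Sl2

variable {k L : Type*} [Field k] [LieRing L] [LieAlgebra k L] {e f h : L}

theorem lie_smul_add_smul_add_smul (hef : ⁅e, f⁆ = h) (hhe : ⁅h, e⁆ = (2 : k) • e)
    (hhf : ⁅h, f⁆ = -((2 : k) • f)) (a₁ b₁ c₁ a₂ b₂ c₂ : k) :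
    ⁅a₁ • e + b₁ • f + c₁ • h, a₂ • e + b₂ • f + c₂ • h⁆ =
      (2 * (c₁ * a₂ - a₁ * c₂)) • e + (2 * (b₁ * c₂ - c₁ * b₂)) • f +
        (a₁ * b₂ - b₁ * a₂) • h := by
  have hfe : ⁅f, e⁆ = -h := by rw [← lie_skew, hef]
  have heh : ⁅e, h⁆ = -((2 : k) • e) := by rw [← lie_skew, hhe]
  have hfh : ⁅f, h⁆ = (2 : k) • f := by rw [← lie_skew, hhf, neg_neg]
  simp only [add_lie, lie_add, smul_lie, lie_smul, lie_self, hef, hfe, heh, hfh, hhe, hhf]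
  module

theorem isotropic_or_eq_zero_of_toSubmodule_eq_ker (hef : ⁅e, f⁆ = h)
    (hhe : ⁅h, e⁆ = (2 : k) • e) (hhf : ⁅h, f⁆ = -((2 : k) • f)) {S : LieSubalgebra k L}
    {φ : Dual k L} (hS : S.toSubmodule = LinearMap.ker φ) :
    4 * (φ e * φ f) + φ h ^ 2 = 0 ∨ (φ e = 0 ∧ φ f = 0 ∧ φ h = 0) := by
  have hmem (x : L) : x ∈ S ↔ φ x = 0 := by
    rw [← LieSubalgebra.mem_toSubmodule, hS, LinearMap.mem_ker]
  have hφ (a b c : k) : φ (a • e + b • f + c • h) = a * φ e + b * φ f + c * φ h := by simp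
  have hlie (a₁ b₁ c₁ a₂ b₂ c₂ : k) (h₁ : a₁ * φ e + b₁ * φ f + c₁ * φ h = 0)
      (h₂ : a₂ * φ e + b₂ * φ f + c₂ * φ h = 0) :
      2 * (c₁ * a₂ - a₁ * c₂) * φ e + 2 * (b₁ * c₂ - c₁ * b₂) * φ f +
        (a₁ * b₂ - b₁ * a₂) * φ h = 0 := by
    have := S.lie_mem ((hmem _).mpr ((hφ ..).trans h₁)) ((hmem _).mpr ((hφ ..).trans h₂))
    rwa [hmem, lie_smul_add_smul_add_smul hef hhe hhf, hφ] at this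
  have hp : φ e * (4 * (φ e * φ f) + φ h ^ 2) = 0 := by
    linear_combination hlie (φ f) (-φ e) 0 (φ h) 0 (-φ e) (by ring) (by ring)
  have hq : φ f * (4 * (φ e * φ f) + φ h ^ 2) = 0 := by
    linear_combination hlie (φ f) (-φ e) 0 0 (φ h) (-φ f) (by ring) (by ring)
  have hr : φ h * (4 * (φ e * φ f) + φ h ^ 2) = 0 := by
    linear_combination hlie (φ h) 0 (-φ e) 0 (φ h) (-φ f) (by ring) (by ring)
  refine or_iff_not_imp_left.mpr fun hX => ?_
  exact ⟨by simpa [hX] using hp, by simpa [hX] using hq, by simpa [hX] using hr⟩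

end Sl2

theorem two_dim_subalgebras_of_sl2_general
    (k : Type*) [Field k] (hchar : (2 : k) ≠ 0)
    {L : Type*} [LieRing L] [LieAlgebra k L]
    (b : Module.Basis (Fin 3) k L)
    (e f h : L) (he : e = b 0) (hf : f = b 1) (hh : h = b 2)
    (hef : ⁅e, f⁆ = h) (hhe : ⁅h, e⁆ = (2 : k) • e) (hhf : ⁅h, f⁆ = -((2 : k) • f))
    (S : LieSubalgebra k L)
    (hS : Module.finrank k S = 2) :
    S.toSubmodule = Submodule.span k {f, h} ∨
    S.toSubmodule = Submodule.span k {e, h} ∨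
    ∃ a : k, a ≠ 0 ∧
      S.toSubmodule = Submodule.span k {e + a • h, -((4 * a) • f) + h} := by
  have : FiniteDimensional k L := .of_basis b
  have hefh : LinearIndependent k ![e, f, h] := by
    convert b.linearIndependent
    ext i; fin_cases i <;> simp [he, hf, hh]
  obtain ⟨φ, hφ, hker⟩ := S.toSubmodule.exists_dual_ker_eq_of_finrank_add_one
    (by rw [finrank_eq_card_basis b, Fintype.card_fin]; exact congrArg (· + 1) hS)
  have hiso := (isotropic_or_eq_zero_of_toSubmodule_eq_ker hef hhe hhf hker.symm).resolve_right
    fun ⟨hp, hq, hr⟩ => hφ <| b.ext fun i => by fin_cases i <;> simp [← he, ← hf, ← hh, hp, hq, hr]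
  have hspan {x y : L} (hx : φ x = 0) (hy : φ y = 0) (hxy : LinearIndependent k ![x, y]) :
      S.toSubmodule = Submodule.span k {x, y} :=
    S.toSubmodule.eq_span_pair_of_finrank_eq_two hS (hker ▸ hx) (hker ▸ hy) hxy
  rcases isotropic_cases hchar hiso with ⟨hq, hr⟩ | ⟨hp, hr⟩ | ⟨a, ha, hp, hq⟩
  · refine .inl (hspan hq hr (LinearIndependent.pair_iff.mpr fun s t hst => ?_))
    obtain ⟨-, hs, ht⟩ := hefh.eq_zero_of_smul_add_smul_add_smul (a := 0) (by simpa using hst)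
    exact ⟨hs, ht⟩
  · refine .inr (.inl (hspan hp hr (LinearIndependent.pair_iff.mpr fun s t hst => ?_)))
    obtain ⟨hs, -, ht⟩ := hefh.eq_zero_of_smul_add_smul_add_smul (b := 0) (by simpa using hst)
    exact ⟨hs, ht⟩
  · refine .inr (.inr ⟨a, ha, hspan (by simpa) (by simpa) ?_⟩)
    refine LinearIndependent.pair_iff.mpr fun s t hst => ?_
    obtain ⟨hs, -, hst'⟩ := hefh.eq_zero_of_smul_add_smul_add_smul
      (a := s) (b := -(4 * a * t)) (c := s * a + t) (by rw [← hst]; module)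
    exact ⟨hs, by simpa [hs] using hst'⟩

/-- Every 2-dimensional Lie subalgebra of `sl₂(k)` (k algebraically closed,
char k ≠ 2, presented by its standard basis `e, f, h` with `[e,f] = h`,
`[h,e] = 2e`, `[h,f] = -2f`) is `kf + kh`, `ke + kh`, or
`k(e + ah) + k(-4af + h)` for some `a ∈ kˣ`. -/
theorem two_dim_subalgebras_of_sl2
    (k : Type*) [Field k] [IsAlgClosed k] (hchar : (2 : k) ≠ 0)
    {L : Type*} [LieRing L] [LieAlgebra k L]
    (b : Module.Basis (Fin 3) k L)
    (e f h : L) (he : e = b 0) (hf : f = b 1) (hh : h = b 2)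
    (hef : ⁅e, f⁆ = h) (hhe : ⁅h, e⁆ = (2 : k) • e) (hhf : ⁅h, f⁆ = -((2 : k) • f))
    (S : LieSubalgebra k L)
    (hS : Module.finrank k S = 2) :
    S.toSubmodule = Submodule.span k {f, h} ∨
    S.toSubmodule = Submodule.span k {e, h} ∨
    ∃ a : k, a ≠ 0 ∧
      S.toSubmodule = Submodule.span k {e + a • h, -((4 * a) • f) + h} :=
  two_dim_subalgebras_of_sl2_general k hchar b e f h he hf hh hef hhe hhf S hS
end

section
/- The Lie algebra $sl_2(k)$ over an algebraically closed field $k$ of characteristic zero has small centralizers: for every nonzero $x \in sl_2(k)$, the centralizer $\{y \in sl_2(k) : [x,y] = 0\}$ is 1-dimensional. -/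
noncomputable section

/-!
In the basis `e, f, h` the coordinates of `⁅x, y⁆` are, up to the factors `2, 2, 1` and swapping
the first two, those of the cross product of the coordinate vectors of `x` and `y`. A cross product
vanishes exactly when its factors are proportional, so the centralizer of `x ≠ 0` is `k ∙ x`.
-/

open Matrix

section
variable {k L : Type*} [Field k] [LieRing L] [LieAlgebra k L]

theorem crossProduct_eq_zero_iff_mem_span_singleton {v w : Fin 3 → k} (hv : v ≠ 0) :
    v ⨯₃ w = 0 ↔ w ∈ k ∙ v := by
  rw [← not_iff_not, ← ne_eq, crossProduct_ne_zero_iff_linearIndependent,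
    LinearIndependent.pair_iff' hv, Submodule.mem_span_singleton]
  exact not_exists.symm

variable (b : Module.Basis (Fin 3) k L) (hef : ⁅b 0, b 1⁆ = b 2)
  (hhe : ⁅b 2, b 0⁆ = (2 : k) • b 0) (hhf : ⁅b 2, b 1⁆ = -((2 : k) • b 1))
include hef hhe hhf

theorem Module.Basis.lie_eq_cross (x y : L) :
    ⁅x, y⁆ = (2 * (b.equivFun x ⨯₃ b.equivFun y) 1) • b 0
      + (2 * (b.equivFun x ⨯₃ b.equivFun y) 0) • b 1 + (b.equivFun x ⨯₃ b.equivFun y) 2 • b 2 := by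
  have hfe : ⁅b 1, b 0⁆ = -b 2 := by rw [← lie_skew, hef]
  have heh : ⁅b 0, b 2⁆ = -((2 : k) • b 0) := by rw [← lie_skew, hhe]
  have hfh : ⁅b 1, b 2⁆ = (2 : k) • b 1 := by rw [← lie_skew, hhf, neg_neg]
  conv_lhs => rw [← b.sum_equivFun x, ← b.sum_equivFun y]
  simp only [Fin.sum_univ_three, lie_add, add_lie, lie_smul, smul_lie, hef, hfe, hhe, hhf, heh,
    hfh, lie_self, smul_zero, cross_apply, cons_val_zero, cons_val_one, cons_val_two,
    tail_cons, head_cons]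
  module

theorem Module.Basis.lie_eq_zero_iff_cross_eq_zero (h2 : (2 : k) ≠ 0) (x y : L) :
    ⁅x, y⁆ = 0 ↔ b.equivFun x ⨯₃ b.equivFun y = 0 := by
  rw [b.lie_eq_cross hef hhe hhf, ← b.equivFun.map_eq_zero_iff]
  simp [← List.ofFn_inj, h2]
  exact and_left_comm

theorem Module.Basis.ker_ad_eq_span_singleton (h2 : (2 : k) ≠ 0) {x : L} (hx : x ≠ 0) :
    LinearMap.ker (LieAlgebra.ad k L x) = k ∙ x := by
  ext y
  rw [LinearMap.mem_ker, LieAlgebra.ad_apply, b.lie_eq_zero_iff_cross_eq_zero hef hhe hhf h2,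
    crossProduct_eq_zero_iff_mem_span_singleton (by simpa using hx), Submodule.mem_span_singleton,
    Submodule.mem_span_singleton]
  simp only [← map_smul, b.equivFun.injective.eq_iff]

end

theorem sl2_small_centralizers_general
    (k : Type*) [Field k] [CharZero k]
    {L : Type*} [LieRing L] [LieAlgebra k L]
    (b : Module.Basis (Fin 3) k L)
    (e f h : L) (he : e = b 0) (hf : f = b 1) (hh : h = b 2)
    (hef : ⁅e, f⁆ = h) (hhe : ⁅h, e⁆ = (2 : k) • e) (hhf : ⁅h, f⁆ = -((2 : k) • f)) :
    ∀ x : L, x ≠ 0 →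
      Module.finrank k (LinearMap.ker (LieAlgebra.ad k L x)) = 1 := by
  intro x hx
  subst he hf hh
  rw [b.ker_ad_eq_span_singleton hef hhe hhf two_ne_zero hx, finrank_span_singleton hx]

/-- `sl₂(k)` (k algebraically closed of characteristic zero, presented by its
standard basis `e, f, h`) has small centralizers: the centralizer of every
nonzero element is 1-dimensional. -/
theorem sl2_small_centralizers
    (k : Type*) [Field k] [IsAlgClosed k] [CharZero k]
    {L : Type*} [LieRing L] [LieAlgebra k L]
    (b : Module.Basis (Fin 3) k L)
    (e f h : L) (he : e = b 0) (hf : f = b 1) (hh : h = b 2)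
    (hef : ⁅e, f⁆ = h) (hhe : ⁅h, e⁆ = (2 : k) • e) (hhf : ⁅h, f⁆ = -((2 : k) • f)) :
    ∀ x : L, x ≠ 0 →
      Module.finrank k (LinearMap.ker (LieAlgebra.ad k L x)) = 1 :=
  sl2_small_centralizers_general k b e f h he hf hh hef hhe hhf

end
end
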